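/- arXiv:2504.16311 — 4 statements merged into one kernel-verified Lean document; each statement's English description precedes it below -/
import Mathlib

section
/- Let H be a universal family of hash functions from a finite set A to a finite set W with |W| ≤ |A|. For independent uniformly random h ∈ H and a ∈ A, the collision probability of the pair (h(a), h), i.e. the probability that two independent copies coincide, is at most 2/(|H|·|W|). -/
/-- Left-over-hash style bound: for a universal hash family `H : A → W` with `|W| ≤ |A|`,
the collision probability of the pair `(h(a), h)` for independent uniform `h ∈ H`, `a ∈ A`
is at most `2/(|H|·|W|)`. -/
theorem stmt4 {A W H : Type*} [Fintype A] [Fintype W] [Fintype H]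
    [Nonempty A] [Nonempty W] [Nonempty H] [DecidableEq W] [DecidableEq H]
    (eval : H → A → W)
    (hWA : Fintype.card W ≤ Fintype.card A)
    (huniv : ∀ a a' : A, a ≠ a' →
      ((Finset.univ.filter (fun h : H => eval h a = eval h a')).card : ℝ)
          / (Fintype.card H : ℝ)
        ≤ 1 / (Fintype.card W : ℝ)) :
    ((Finset.univ.filter (fun q : (H × A) × (H × A) =>
        eval q.1.1 q.1.2 = eval q.2.1 q.2.2 ∧ q.1.1 = q.2.1)).card : ℝ)
        / ((Fintype.card H : ℝ) * (Fintype.card A : ℝ)) ^ 2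
      ≤ 2 / ((Fintype.card H : ℝ) * (Fintype.card W : ℝ)) := by
  classical
  have hH : (0:ℝ) < (Fintype.card H : ℝ) := by
    exact_mod_cast Fintype.card_pos
  have hA : (0:ℝ) < (Fintype.card A : ℝ) := by
    exact_mod_cast Fintype.card_pos
  have hW : (0:ℝ) < (Fintype.card W : ℝ) := by
    exact_mod_cast Fintype.card_pos
  have hWA' : (Fintype.card W : ℝ) ≤ (Fintype.card A : ℝ) := by exact_mod_cast hWA
  -- rewrite the count as a double sum over a, a' of counts over h
  have key : (Finset.univ.filter (fun q : (H × A) × (H × A) =>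
        eval q.1.1 q.1.2 = eval q.2.1 q.2.2 ∧ q.1.1 = q.2.1)).card
      = ∑ a : A, ∑ a' : A,
          (Finset.univ.filter (fun h : H => eval h a = eval h a')).card := by
    have e1 : (Finset.univ.filter (fun q : (H × A) × (H × A) =>
          eval q.1.1 q.1.2 = eval q.2.1 q.2.2 ∧ q.1.1 = q.2.1)).card
        = ∑ h : H, ∑ a : A, ∑ a' : A,
            (if eval h a = eval h a' then 1 else 0) := by
      rw [Finset.card_filter]
      rw [Fintype.sum_prod_type]
      simp only [Fintype.sum_prod_type]
      refine Finset.sum_congr rfl (fun h _ => Finset.sum_congr rfl (fun a _ => ?_))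
      rw [Finset.sum_comm]
      refine Finset.sum_congr rfl (fun a' _ => ?_)
      have hrw : ∀ h' : H, (if eval h a = eval h' a' ∧ h = h' then 1 else 0)
          = if h = h' then (if eval h a = eval h' a' then 1 else 0) else 0 := by
        intro h'; by_cases hh : h = h' <;> simp [hh]
      simp only [hrw]
      rw [Finset.sum_ite_eq]
      simp
    rw [e1, Finset.sum_comm]
    refine Finset.sum_congr rfl (fun a _ => ?_)
    rw [Finset.sum_comm]
    exact Finset.sum_congr rfl (fun a' _ => (Finset.card_filter _ _).symm)
  -- off-diagonal bound: card * W ≤ H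
  have hoff : ∀ a a' : A, a ≠ a' →
      ((Finset.univ.filter (fun h : H => eval h a = eval h a')).card : ℝ)
        * (Fintype.card W : ℝ) ≤ (Fintype.card H : ℝ) := by
    intro a a' hne
    have := huniv a a' hne
    rw [div_le_div_iff₀ hH hW] at this
    linarith
  -- any such card is at most card H
  have hcard : ∀ a a' : A,
      ((Finset.univ.filter (fun h : H => eval h a = eval h a')).card : ℝ)
        ≤ (Fintype.card H : ℝ) := by
    intro a a'
    exact_mod_cast Finset.card_filter_le _ _
  -- main counting bound: N * W ≤ A*H*W + A^2*H
  have hbound : ((Finset.univ.filter (fun q : (H × A) × (H × A) =>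
        eval q.1.1 q.1.2 = eval q.2.1 q.2.2 ∧ q.1.1 = q.2.1)).card : ℝ)
        * (Fintype.card W : ℝ)
      ≤ (Fintype.card A : ℝ) * (Fintype.card H : ℝ) * (Fintype.card W : ℝ)
        + (Fintype.card A : ℝ)^2 * (Fintype.card H : ℝ) := by
    rw [key]
    push_cast
    rw [Finset.sum_mul]
    have step : ∀ a : A, (∑ a' : A,
        ((Finset.univ.filter (fun h : H => eval h a = eval h a')).card : ℝ))
          * (Fintype.card W : ℝ)
        ≤ (Fintype.card H : ℝ) * (Fintype.card W : ℝ)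
          + (Fintype.card A : ℝ) * (Fintype.card H : ℝ) := by
      intro a
      rw [Finset.sum_mul]
      rw [← Finset.sum_erase_add _ _ (Finset.mem_univ a)]
      have h1 : ∑ a' ∈ Finset.univ.erase a,
          ((Finset.univ.filter (fun h : H => eval h a = eval h a')).card : ℝ)
            * (Fintype.card W : ℝ)
          ≤ (Fintype.card A : ℝ) * (Fintype.card H : ℝ) := by
        calc ∑ a' ∈ Finset.univ.erase a,
            ((Finset.univ.filter (fun h : H => eval h a = eval h a')).card : ℝ)
              * (Fintype.card W : ℝ)
            ≤ ∑ _a' ∈ Finset.univ.erase a, (Fintype.card H : ℝ) := by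
              refine Finset.sum_le_sum (fun a' ha' => ?_)
              exact hoff a a' (Ne.symm (Finset.ne_of_mem_erase ha'))
          _ = ((Finset.univ.erase a).card : ℝ) * (Fintype.card H : ℝ) := by
              rw [Finset.sum_const, nsmul_eq_mul]
          _ ≤ (Fintype.card A : ℝ) * (Fintype.card H : ℝ) := by
              have : ((Finset.univ.erase a).card : ℝ) ≤ (Fintype.card A : ℝ) := by
                exact_mod_cast Finset.card_le_card (Finset.erase_subset _ _)
              exact mul_le_mul_of_nonneg_right this hH.le
      have h2 : ((Finset.univ.filter (fun h : H => eval h a = eval h a)).card : ℝ)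
            * (Fintype.card W : ℝ)
          ≤ (Fintype.card H : ℝ) * (Fintype.card W : ℝ) :=
        mul_le_mul_of_nonneg_right (hcard a a) hW.le
      linarith
    calc ∑ a : A, (∑ a' : A,
          ((Finset.univ.filter (fun h : H => eval h a = eval h a')).card : ℝ))
            * (Fintype.card W : ℝ)
        ≤ ∑ _a : A, ((Fintype.card H : ℝ) * (Fintype.card W : ℝ)
            + (Fintype.card A : ℝ) * (Fintype.card H : ℝ)) :=
          Finset.sum_le_sum (fun a _ => step a)
      _ = (Fintype.card A : ℝ) * ((Fintype.card H : ℝ) * (Fintype.card W : ℝ)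
            + (Fintype.card A : ℝ) * (Fintype.card H : ℝ)) := by
          rw [Finset.sum_const, nsmul_eq_mul]; simp
      _ = (Fintype.card A : ℝ) * (Fintype.card H : ℝ) * (Fintype.card W : ℝ)
            + (Fintype.card A : ℝ)^2 * (Fintype.card H : ℝ) := by ring
  -- finish by algebra
  rw [div_le_div_iff₀ (by positivity) (by positivity)]
  nlinarith [hbound, mul_pos hH hA, mul_pos hH hW, sq_nonneg (Fintype.card H : ℝ),
    mul_le_mul_of_nonneg_left hWA' (mul_nonneg (mul_nonneg hA.le hH.le) hH.le)]
end

section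
/- Let H be a universal family of hash functions from a finite set A to a finite set W with |W| ≤ |A|. For independent uniformly random h ∈ H and a ∈ A, the pair (h(a), h) ∈ W × H takes values in a set of size at least |H|·|W|/2 (i.e., the support of the distribution of (h(a), h) has cardinality at least |H|·|W|/2). -/
/-- For a universal hash family `H : A → W` with `|W| ≤ |A|`, the support of the
distribution of `(h(a), h)` for uniform `h ∈ H`, `a ∈ A` has size at least `|H|·|W|/2`. -/
theorem stmt5 {A W H : Type*} [Fintype A] [Fintype W] [Fintype H]
    [Nonempty A] [Nonempty W] [Nonempty H] [DecidableEq W] [DecidableEq H]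
    (eval : H → A → W)
    (hWA : Fintype.card W ≤ Fintype.card A)
    (huniv : ∀ a a' : A, a ≠ a' →
      ((Finset.univ.filter (fun h : H => eval h a = eval h a')).card : ℝ)
          / (Fintype.card H : ℝ)
        ≤ 1 / (Fintype.card W : ℝ)) :
    (Fintype.card H : ℝ) * (Fintype.card W : ℝ) / 2
      ≤ ((Finset.univ.image (fun q : H × A => (eval q.1 q.2, q.1))).card : ℝ) := by
  classical
  set key : H × A → W × H := fun q => (eval q.1 q.2, q.1) with hkey
  set S := Finset.univ.image key with hS
  set f : W × H → ℕ := fun s => (Finset.univ.filter (fun q : H × A => key q = s)).card with hf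
  have hsum1 : ∑ s ∈ S, f s = Fintype.card H * Fintype.card A := by
    rw [hS, hf, ← Finset.card_eq_sum_card_image key Finset.univ]
    simp [Fintype.card_prod]
  have hsum2 : ∑ s ∈ S, f s * f s
      = ∑ a : A, ∑ a' : A, (Finset.univ.filter (fun h : H => eval h a = eval h a')).card := by
    have step1 : ∑ s ∈ S, f s * f s = ∑ q : H × A, f (key q) := by
      rw [hS, ← Finset.sum_fiberwise_of_maps_to (fun q _ => Finset.mem_image_of_mem key (Finset.mem_univ q)) (fun q => f (key q))]
      apply Finset.sum_congr rfl
      intro s _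
      rw [Finset.sum_congr rfl (fun q hq => by rw [(Finset.mem_filter.mp hq).2]),
        Finset.sum_const, smul_eq_mul, hf]
    rw [step1]
    have expand : ∀ q : H × A, f (key q)
        = ∑ q' : H × A, if key q' = key q then 1 else 0 := by
      intro q; simp only [hf, Finset.card_filter]
    simp only [expand]
    rw [Fintype.sum_prod_type]
    have : ∀ (h : H) (a : A), (∑ q' : H × A, if key q' = key (h, a) then 1 else 0)
        = ∑ a' : A, if eval h a' = eval h a then 1 else 0 := by
      intro h a
      rw [Fintype.sum_prod_type]
      rw [Finset.sum_comm]
      have : ∀ a' : A, (∑ h' : H, if key (h', a') = key (h, a) then 1 else 0)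
          = if eval h a' = eval h a then 1 else 0 := by
        intro a'
        have : ∀ h' : H, (if key (h', a') = key (h, a) then 1 else 0)
            = if h' = h then (if eval h' a' = eval h a then 1 else 0) else 0 := by
          intro h'
          simp only [hkey, Prod.mk.injEq]
          by_cases hh : h' = h <;> by_cases he : eval h' a' = eval h a <;> simp [hh, he]
        simp only [this]
        rw [Finset.sum_ite_eq' Finset.univ h (fun h' => if eval h' a' = eval h a then 1 else 0)]
        simp
      simp only [this]
    simp only [this]
    rw [Finset.sum_comm]
    refine Finset.sum_congr rfl fun a _ => ?_
    rw [Finset.sum_comm]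
    refine Finset.sum_congr rfl fun a' _ => ?_
    rw [Finset.card_filter]
    exact Finset.sum_congr rfl fun h _ => if_congr eq_comm rfl rfl
  have hApos : (0:ℝ) < Fintype.card A := by exact_mod_cast Fintype.card_pos
  have hWpos : (0:ℝ) < Fintype.card W := by exact_mod_cast Fintype.card_pos
  have hHpos : (0:ℝ) < Fintype.card H := by exact_mod_cast Fintype.card_pos
  have hWA' : (Fintype.card W : ℝ) ≤ Fintype.card A := by exact_mod_cast hWA
  have hC : (∑ s ∈ S, (f s : ℝ) ^ 2)
      ≤ 2 * (Fintype.card A:ℝ)^2 * (Fintype.card H:ℝ) / (Fintype.card W:ℝ) := by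
    have cast1 : (∑ s ∈ S, (f s:ℝ) ^ 2) = ((∑ s ∈ S, f s * f s : ℕ) : ℝ) := by
      push_cast [sq]; rfl
    rw [cast1, hsum2]
    push_cast
    have bound : ∀ a : A,
        ∑ a' : A, ((Finset.univ.filter (fun h : H => eval h a = eval h a')).card : ℝ)
        ≤ (Fintype.card H:ℝ)
          + (Fintype.card A:ℝ) * ((Fintype.card H:ℝ) / (Fintype.card W:ℝ)) := by
      intro a
      rw [← Finset.sum_erase_add _ _ (Finset.mem_univ a)]
      rw [add_comm]
      gcongr ?_ + ?_
      · have : (Finset.univ.filter (fun h : H => eval h a = eval h a)) = Finset.univ := by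
          simp
        rw [this]; simp
      · calc ∑ a' ∈ Finset.univ.erase a,
              ((Finset.univ.filter (fun h : H => eval h a = eval h a')).card : ℝ)
            ≤ (Finset.univ.erase a).card • ((Fintype.card H:ℝ) / (Fintype.card W:ℝ)) := by
              apply Finset.sum_le_card_nsmul
              intro a' ha'
              have hne : a ≠ a' := (Finset.ne_of_mem_erase ha').symm
              have := huniv a a' hne
              rw [div_le_div_iff₀ hHpos hWpos] at this
              rw [le_div_iff₀ hWpos]
              linarith
          _ ≤ (Fintype.card A:ℝ) * ((Fintype.card H:ℝ) / (Fintype.card W:ℝ)) := by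
              rw [nsmul_eq_mul]
              have hle : (((Finset.univ.erase a).card : ℕ) : ℝ) ≤ (Fintype.card A:ℝ) := by
                exact_mod_cast Finset.card_le_card (Finset.erase_subset a Finset.univ)
              exact mul_le_mul_of_nonneg_right hle (by positivity)
    calc ∑ a : A, ∑ a' : A, ((Finset.univ.filter (fun h : H => eval h a = eval h a')).card : ℝ)
        ≤ ∑ _a : A, ((Fintype.card H:ℝ)
            + (Fintype.card A:ℝ) * ((Fintype.card H:ℝ) / (Fintype.card W:ℝ))) :=
          Finset.sum_le_sum fun a _ => bound a
      _ = (Fintype.card A:ℝ) * ((Fintype.card H:ℝ)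
            + (Fintype.card A:ℝ) * ((Fintype.card H:ℝ) / (Fintype.card W:ℝ))) := by
          rw [Finset.sum_const, Finset.card_univ, nsmul_eq_mul]
      _ ≤ 2 * (Fintype.card A:ℝ)^2 * (Fintype.card H:ℝ) / (Fintype.card W:ℝ) := by
          rw [div_eq_mul_inv, div_eq_mul_inv, ← sub_nonneg]
          have hinv : (0:ℝ) < (Fintype.card W:ℝ)⁻¹ := by positivity
          have hid : (Fintype.card W:ℝ) * (Fintype.card W:ℝ)⁻¹ = 1 :=
            mul_inv_cancel₀ hWpos.ne'
          nlinarith [mul_nonneg (mul_nonneg hApos.le hHpos.le) (sub_nonneg.mpr hWA'),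
            mul_pos hApos hHpos, hWpos]
  have cauchy := sq_sum_le_card_mul_sum_sq (s := S) (f := fun s => (f s : ℝ))
  have hsum1' : (∑ s ∈ S, (f s : ℝ)) = (Fintype.card H:ℝ) * (Fintype.card A:ℝ) := by
    have : (∑ s ∈ S, (f s : ℝ)) = ((∑ s ∈ S, f s : ℕ) : ℝ) := by push_cast; rfl
    rw [this, hsum1]; push_cast; ring
  rw [hsum1'] at cauchy
  have hScard : (S.card : ℝ) ≥ 0 := by positivity
  have key : ((Fintype.card H:ℝ) * (Fintype.card A:ℝ))^2
      ≤ (S.card : ℝ) * (2 * (Fintype.card A:ℝ)^2 * (Fintype.card H:ℝ) / (Fintype.card W:ℝ)) := by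
    calc ((Fintype.card H:ℝ) * (Fintype.card A:ℝ))^2 ≤ (S.card : ℝ) * ∑ s ∈ S, (f s:ℝ)^2 := cauchy
      _ ≤ _ := by gcongr
  show (Fintype.card H : ℝ) * (Fintype.card W : ℝ) / 2 ≤ (S.card : ℝ)
  have key2 : ((Fintype.card H:ℝ) * (Fintype.card A:ℝ))^2 * (Fintype.card W:ℝ)
      ≤ (S.card : ℝ) * (2 * (Fintype.card A:ℝ)^2 * (Fintype.card H:ℝ)) := by
    have h := mul_le_mul_of_nonneg_right key hWpos.le
    rwa [mul_assoc, div_mul_cancel₀ _ hWpos.ne'] at h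
  nlinarith [mul_pos (mul_pos hApos hApos) hHpos, hScard]
end

section
/- Let H be a universal family of hash functions from a finite set A to a finite set W with |W| ≤ |A|, and for h ∈ H, w ∈ W define h⁻¹_A(w) to be the minimum element a ∈ A (under a fixed linear order on A) with h(a) = w, if one exists. For uniformly random h ∈ H and w ∈ W, the pair (h, h⁻¹_A(w)) is defined with probability at least 1/2, and conditioned on being defined it is uniformly distributed on a set of cardinality at least |H|·|W|/2. -/
/-- For a universal hash family `H : A → W` with `|W| ≤ |A|` and the lexicographic-first
pseudo-inverse `h⁻¹_A(w) = min {a ∈ A : h a = w}`, for uniform `(h, w) ∈ H × W`: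
the pair `(h, h⁻¹_A(w))` is defined with probability at least `1/2`, and conditioned on
being defined it is uniformly distributed on a set of cardinality at least `|H|·|W|/2`
(the map `(h, w) ↦ (h, h⁻¹_A(w))` is injective on the event of being defined, so its
image has cardinality at least `|H|·|W|/2`). -/
theorem stmt7 {A W H : Type*} [Fintype A] [Fintype W] [Fintype H]
    [Nonempty A] [Nonempty W] [Nonempty H]
    [LinearOrder A] [DecidableEq W] [DecidableEq H]
    (eval : H → A → W)
    (hWA : Fintype.card W ≤ Fintype.card A)
    (huniv : ∀ a a' : A, a ≠ a' →
      ((Finset.univ.filter (fun h : H => eval h a = eval h a')).card : ℝ)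
          / (Fintype.card H : ℝ)
        ≤ 1 / (Fintype.card W : ℝ))
    (pinv : H → W → WithBot A)
    (hpinv : ∀ h w, pinv h w = (Finset.univ.filter (fun a : A => eval h a = w)).min) :
    -- defined with probability at least 1/2
    ((1 : ℝ) / 2 ≤
      ((Finset.univ.filter (fun q : H × W => pinv q.1 q.2 ≠ ⊥)).card : ℝ)
        / ((Fintype.card H : ℝ) * (Fintype.card W : ℝ)))
    -- injective on the event of being defined, hence uniform on the image when defined
    ∧ Set.InjOn (fun q : H × W => (q.1, pinv q.1 q.2))
        {q : H × W | pinv q.1 q.2 ≠ ⊥}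
    -- and the image (the support of the conditional distribution) has size ≥ |H|·|W|/2
    ∧ (Fintype.card H : ℝ) * (Fintype.card W : ℝ) / 2
        ≤ (((Finset.univ.filter (fun q : H × W => pinv q.1 q.2 ≠ ⊥)).image
            (fun q : H × W => (q.1, pinv q.1 q.2))).card : ℝ) := by
  classical
  have hA0 : (0:ℝ) < Fintype.card A := by positivity
  have hW0 : (0:ℝ) < Fintype.card W := by positivity
  have hH0 : (0:ℝ) < Fintype.card H := by positivity
  set T := Finset.univ.filter (fun q : H × W => pinv q.1 q.2 ≠ ⊥) with hT
  set n : H × W → ℕ := fun q => (Finset.univ.filter (fun a : A => eval q.1 a = q.2)).card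
    with hn
  -- membership in T vs n > 0
  have hbot : ∀ (h : H) (w : W), pinv h w = ⊥ ↔
      (Finset.univ.filter (fun a : A => eval h a = w)) = ∅ := by
    intro h w; rw [hpinv]; exact Finset.min_eq_top
  have hmem : ∀ q : H × W, q ∈ T ↔ 0 < n q := by
    intro q
    simp only [hT, Finset.mem_filter, Finset.mem_univ, true_and, hn, Finset.card_pos,
      ne_eq, hbot, ← Finset.nonempty_iff_ne_empty]
  -- injectivity
  have hinj : Set.InjOn (fun q : H × W => (q.1, pinv q.1 q.2))
      {q : H × W | pinv q.1 q.2 ≠ ⊥} := by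
    rintro ⟨h, w⟩ hq ⟨h', w'⟩ hq' heq
    simp only [Prod.mk.injEq] at heq
    obtain ⟨rfl, h2⟩ := heq
    obtain ⟨a, ha⟩ := WithBot.ne_bot_iff_exists.mp hq
    have haw : eval h a = w := by
      have h3 : (Finset.univ.filter (fun x : A => eval h x = w)).min = (a : WithBot A) := by
        rw [← hpinv h w]; exact ha.symm
      simpa using Finset.mem_of_min h3
    have haw' : eval h a = w' := by
      have h3 : (Finset.univ.filter (fun x : A => eval h x = w')).min = (a : WithBot A) := by
        rw [← hpinv h w', ← h2]; exact ha.symm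
      simpa using Finset.mem_of_min h3
    simp [← haw, ← haw']
  -- fiber sums
  have fiber_sum : ∀ h : H, ∑ w : W, n (h, w) = Fintype.card A := fun h =>
    (Finset.card_eq_sum_card_fiberwise (f := eval h) (fun a _ => Finset.mem_univ _)).symm
  have fiber_sq : ∀ h : H, ∑ w : W, (n (h, w))^2
      = ((Finset.univ : Finset (A×A)).filter (fun p => eval h p.1 = eval h p.2)).card := by
    intro h
    rw [Finset.card_eq_sum_card_fiberwise (f := fun p : A×A => eval h p.1)
      (t := Finset.univ) (fun p _ => Finset.mem_univ _)]
    refine Finset.sum_congr rfl fun w _ => ?_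
    rw [Finset.filter_filter]
    have : (Finset.univ.filter (fun p : A × A => eval h p.1 = eval h p.2 ∧ eval h p.1 = w))
        = (Finset.univ.filter (fun a : A => eval h a = w)) ×ˢ
          (Finset.univ.filter (fun a : A => eval h a = w)) := by
      ext p
      simp only [Finset.mem_filter, Finset.mem_univ, true_and, Finset.mem_product]
      constructor
      · rintro ⟨h1, h2⟩; exact ⟨h2, h2 ▸ h1.symm⟩
      · rintro ⟨h1, h2⟩; exact ⟨h1.trans h2.symm, h1⟩
    rw [this, Finset.card_product, sq]
  have swap : ∑ h : H, (((Finset.univ : Finset (A×A)).filter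
        (fun p => eval h p.1 = eval h p.2)).card : ℕ)
      = ∑ p : A×A, ((Finset.univ : Finset H).filter
        (fun h => eval h p.1 = eval h p.2)).card := by
    simp_rw [Finset.card_filter]
    exact Finset.sum_comm
  -- bound on sum of squares
  have diag_card : (Finset.univ.filter (fun p : A×A => p.1 = p.2)).card = Fintype.card A := by
    have himg : Finset.univ.filter (fun p : A×A => p.1 = p.2)
        = Finset.univ.image (fun a : A => (a, a)) := by
      ext ⟨x, y⟩
      simp only [Finset.mem_filter, Finset.mem_univ, true_and, Finset.mem_image, Prod.mk.injEq]
      constructor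
      · rintro rfl; exact ⟨x, rfl, rfl⟩
      · rintro ⟨a, rfl, rfl⟩; rfl
    rw [himg, Finset.card_image_of_injective _ (fun a b hab => (Prod.mk.injEq .. ▸ hab).1),
      Finset.card_univ]
  have sumB : (∑ q : H × W, (n q : ℝ)^2)
      ≤ (Fintype.card A : ℝ) * Fintype.card H
        + (Fintype.card A : ℝ)^2 * Fintype.card H / Fintype.card W := by
    have enat : (∑ q : H × W, (n q)^2)
        = ∑ p : A×A, ((Finset.univ : Finset H).filter
            (fun h => eval h p.1 = eval h p.2)).card := by
      rw [Fintype.sum_prod_type, ← swap]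
      exact Finset.sum_congr rfl fun h _ => fiber_sq h
    have e1 : (∑ q : H × W, (n q : ℝ)^2)
        = ∑ p : A×A, (((Finset.univ : Finset H).filter
            (fun h => eval h p.1 = eval h p.2)).card : ℝ) := by
      have := congrArg (Nat.cast (R := ℝ)) enat
      push_cast at this
      exact this
    rw [e1, ← Finset.sum_filter_add_sum_filter_not Finset.univ (fun p : A×A => p.1 = p.2)]
    have b1 : ∑ p ∈ Finset.univ.filter (fun p : A×A => p.1 = p.2),
        (((Finset.univ : Finset H).filter (fun h => eval h p.1 = eval h p.2)).card : ℝ)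
        ≤ (Fintype.card A : ℝ) * Fintype.card H := by
      calc _ ≤ ∑ _p ∈ Finset.univ.filter (fun p : A×A => p.1 = p.2), (Fintype.card H : ℝ) := by
              refine Finset.sum_le_sum fun p _ => ?_
              exact_mod_cast Finset.card_le_card (Finset.subset_univ _) |>.trans
                (le_of_eq (Finset.card_univ))
        _ = _ := by rw [Finset.sum_const, diag_card, nsmul_eq_mul]
    have b2 : ∑ p ∈ Finset.univ.filter (fun p : A×A => ¬ p.1 = p.2),
        (((Finset.univ : Finset H).filter (fun h => eval h p.1 = eval h p.2)).card : ℝ)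
        ≤ (Fintype.card A : ℝ)^2 * Fintype.card H / Fintype.card W := by
      calc _ ≤ ∑ _p ∈ Finset.univ.filter (fun p : A×A => ¬ p.1 = p.2),
              (Fintype.card H : ℝ) / Fintype.card W := by
              refine Finset.sum_le_sum fun p hp => ?_
              have hne : p.1 ≠ p.2 := (Finset.mem_filter.mp hp).2
              have hu := huniv p.1 p.2 hne
              calc (((Finset.univ : Finset H).filter
                      (fun h => eval h p.1 = eval h p.2)).card : ℝ)
                  = (((Finset.univ : Finset H).filter
                      (fun h => eval h p.1 = eval h p.2)).card : ℝ)
                      / Fintype.card H * Fintype.card H := by field_simp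
                _ ≤ 1 / Fintype.card W * Fintype.card H :=
                    mul_le_mul_of_nonneg_right hu hH0.le
                _ = (Fintype.card H : ℝ) / Fintype.card W := by ring
        _ ≤ (Fintype.card A : ℝ)^2 * ((Fintype.card H : ℝ) / Fintype.card W) := by
              rw [Finset.sum_const, nsmul_eq_mul]
              refine mul_le_mul_of_nonneg_right ?_ (by positivity)
              calc ((Finset.univ.filter (fun p : A×A => ¬ p.1 = p.2)).card : ℝ)
                  ≤ ((Finset.univ : Finset (A×A)).card : ℝ) := by
                    exact_mod_cast Finset.card_le_card (Finset.filter_subset _ _)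
                _ = (Fintype.card A : ℝ)^2 := by
                    rw [Finset.card_univ, Fintype.card_prod]; push_cast; ring
        _ = _ := by ring
    linarith
  -- sum of n over T equals H*A
  have sumA : ∑ q ∈ T, (n q : ℝ) = (Fintype.card H : ℝ) * Fintype.card A := by
    have : ∑ q : H × W, (n q : ℝ) = (Fintype.card H : ℝ) * Fintype.card A := by
      rw [Fintype.sum_prod_type]
      have : ∀ h : H, ∑ w : W, (n (h, w) : ℝ) = (Fintype.card A : ℝ) := fun h => by
        exact_mod_cast congrArg (Nat.cast (R := ℝ)) (fiber_sum h)
      rw [Finset.sum_congr rfl fun h _ => this h, Finset.sum_const, Finset.card_univ,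
        nsmul_eq_mul]
    rw [← this]
    refine Finset.sum_subset (Finset.subset_univ T) fun q _ hq => ?_
    have : ¬ 0 < n q := fun h => hq ((hmem q).mpr h)
    simp [Nat.eq_zero_of_not_pos this]
  -- Cauchy-Schwarz
  have hCS : ((Fintype.card H : ℝ) * Fintype.card A)^2
      ≤ (T.card : ℝ) * ∑ q : H × W, (n q : ℝ)^2 := by
    calc ((Fintype.card H : ℝ) * Fintype.card A)^2 = (∑ q ∈ T, (n q : ℝ))^2 := by rw [sumA]
      _ ≤ (T.card : ℝ) * ∑ q ∈ T, (n q : ℝ)^2 := sq_sum_le_card_mul_sum_sq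
      _ ≤ (T.card : ℝ) * ∑ q : H × W, (n q : ℝ)^2 := by
          refine mul_le_mul_of_nonneg_left ?_ (by positivity)
          refine Finset.sum_le_sum_of_subset_of_nonneg (Finset.subset_univ T)
            fun q _ _ => by positivity
  -- combine
  have hTcard : (Fintype.card H : ℝ) * Fintype.card W / 2 ≤ (T.card : ℝ) := by
    have hD : (∑ q : H × W, (n q : ℝ)^2)
        ≤ 2 * (Fintype.card A : ℝ)^2 * Fintype.card H / Fintype.card W := by
      have : (Fintype.card A : ℝ) * Fintype.card H
          ≤ (Fintype.card A : ℝ)^2 * Fintype.card H / Fintype.card W := by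
        rw [le_div_iff₀ hW0]
        have hwa : (Fintype.card W : ℝ) ≤ Fintype.card A := by exact_mod_cast hWA
        have h4 : (Fintype.card A:ℝ) * Fintype.card H * Fintype.card W
            ≤ (Fintype.card A:ℝ) * Fintype.card H * Fintype.card A := by
          exact mul_le_mul_of_nonneg_left hwa (by positivity)
        nlinarith [h4]
      have heq : 2 * (Fintype.card A : ℝ)^2 * Fintype.card H / Fintype.card W
          = (Fintype.card A : ℝ)^2 * Fintype.card H / Fintype.card W
            + (Fintype.card A : ℝ)^2 * Fintype.card H / Fintype.card W := by ring
      linarith [sumB]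
    have hkey : ((Fintype.card H : ℝ) * Fintype.card A)^2
        ≤ (T.card : ℝ) * (2 * (Fintype.card A : ℝ)^2 * Fintype.card H / Fintype.card W) := by
      refine hCS.trans (mul_le_mul_of_nonneg_left hD (by positivity))
    have hD0 : (0:ℝ) < 2 * (Fintype.card A : ℝ)^2 * Fintype.card H / Fintype.card W := by
      positivity
    rw [← div_le_iff₀ hD0] at hkey
    calc (Fintype.card H : ℝ) * Fintype.card W / 2
        = ((Fintype.card H : ℝ) * Fintype.card A)^2
          / (2 * (Fintype.card A : ℝ)^2 * Fintype.card H / Fintype.card W) := by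
          field_simp
      _ ≤ (T.card : ℝ) := hkey
  refine ⟨?_, hinj, ?_⟩
  · rw [le_div_iff₀ (by positivity)]
    linarith
  · have himg : (T.image (fun q : H × W => (q.1, pinv q.1 q.2))).card = T.card :=
      Finset.card_image_of_injOn fun q hq q' hq' =>
        hinj (Finset.mem_filter.mp hq).2 (Finset.mem_filter.mp hq').2
    rw [himg]
    exact hTcard
end

section
/- Let H be a universal family of hash functions from a finite nonempty set A to {0,1}^k where k = ⌊log₂ |A|⌋. Then |{0,1}^k| ≤ |A| < 2·|{0,1}^k|, and for uniformly random h ∈ H and w ∈ {0,1}^k, the probability that w has a preimage under h in A is at least 1/2. -/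
/-- For a universal hash family from a finite nonempty `A` to `{0,1}^k` with
`k = ⌊log₂ |A|⌋`: `2^k ≤ |A| < 2·2^k`, and for uniform `h ∈ H` and `w ∈ {0,1}^k`, the
probability that `w` has a preimage under `h` in `A` is at least `1/2`. -/
theorem stmt12 {A H : Type*} [Fintype A] [Fintype H] [Nonempty A] [Nonempty H]
    [DecidableEq A] [DecidableEq H]
    (k : ℕ) (hk : k = Nat.log 2 (Fintype.card A))
    (eval : H → A → Fin (2 ^ k))
    (huniv : ∀ a a' : A, a ≠ a' →
      ((Finset.univ.filter (fun h : H => eval h a = eval h a')).card : ℝ)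
          / (Fintype.card H : ℝ)
        ≤ 1 / (2 ^ k : ℝ)) :
    2 ^ k ≤ Fintype.card A ∧ Fintype.card A < 2 * 2 ^ k ∧
    (1 : ℝ) / 2 ≤
      ((Finset.univ.filter
          (fun q : H × Fin (2 ^ k) => ∃ a : A, eval q.1 a = q.2)).card : ℝ)
        / ((Fintype.card H : ℝ) * (2 ^ k : ℝ)) := by
  classical
  have hS1 : 2 ^ k ≤ Fintype.card A := by
    rw [hk]; exact Nat.pow_log_le_self 2 Fintype.card_ne_zero
  have hS2 : Fintype.card A < 2 * 2 ^ k := by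
    rw [hk]
    have := Nat.lt_pow_succ_log_self (by norm_num : 1 < 2) (Fintype.card A)
    rwa [pow_succ, mul_comm] at this
  refine ⟨hS1, hS2, ?_⟩
  set N : ℕ := Fintype.card A with hN
  set M : ℕ := Fintype.card H with hM
  set n : H × Fin (2 ^ k) → ℕ :=
    fun q => (Finset.univ.filter (fun a : A => eval q.1 a = q.2)).card with hn
  set T : Finset (H × Fin (2 ^ k)) :=
    Finset.univ.filter (fun q : H × Fin (2 ^ k) => ∃ a : A, eval q.1 a = q.2) with hT
  -- sum of fibers over w equals |A|
  have hrow : ∀ h : H, ∑ w : Fin (2 ^ k), n (h, w) = N := by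
    intro h
    exact (Finset.card_eq_sum_card_fiberwise
      (f := eval h) (fun a _ => Finset.mem_univ _)).symm
  have hsum : ∑ q : H × Fin (2 ^ k), n q = M * N := by
    rw [Fintype.sum_prod_type]
    simp [hrow, Finset.sum_const, hM, Finset.card_univ]
  -- squared fiber sizes sum to collision counts
  have hfib : ∀ (h : H) (w : Fin (2 ^ k)),
      ((Finset.univ.filter (fun p : A × A => eval h p.1 = eval h p.2)).filter
        (fun p => eval h p.1 = w))
      = (Finset.univ.filter (fun a : A => eval h a = w)) ×ˢ
        (Finset.univ.filter (fun a : A => eval h a = w)) := by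
    intro h w
    ext p
    simp only [Finset.mem_filter, Finset.mem_product, Finset.mem_univ, true_and]
    constructor
    · rintro ⟨h1, h2⟩; exact ⟨h2, h1 ▸ h2⟩
    · rintro ⟨h1, h2⟩; exact ⟨h1.trans h2.symm, h1⟩
  have hrow2 : ∀ h : H, ∑ w : Fin (2 ^ k), (n (h, w)) ^ 2 =
      (Finset.univ.filter (fun p : A × A => eval h p.1 = eval h p.2)).card := by
    intro h
    rw [Finset.card_eq_sum_card_fiberwise
      (f := fun p : A × A => eval h p.1) (t := Finset.univ) (fun p _ => Finset.mem_univ _)]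
    refine Finset.sum_congr rfl (fun w _ => ?_)
    rw [hfib h w, Finset.card_product]
    ring
  -- swap summation: collisions counted over pairs
  have hswap : ∑ h : H,
      ((Finset.univ.filter (fun p : A × A => eval h p.1 = eval h p.2)).card)
      = ∑ p : A × A, (Finset.univ.filter (fun h : H => eval h p.1 = eval h p.2)).card := by
    simp only [Finset.card_filter]
    exact Finset.sum_comm
  -- real bound on collision sum
  have hSpos : (0 : ℝ) < (2 ^ k : ℝ) := by positivity
  have hMpos : (0 : ℝ) < (M : ℝ) := by
    exact_mod_cast Fintype.card_pos
  have hcoll : (∑ p : A × A,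
      ((Finset.univ.filter (fun h : H => eval h p.1 = eval h p.2)).card : ℝ))
      ≤ N * M + (N * N - N) * (M / (2 ^ k : ℝ)) := by
    have huniv' : (Finset.univ : Finset (A × A)) =
        (Finset.univ : Finset A).diag ∪ (Finset.univ : Finset A).offDiag := by
      rw [Finset.diag_union_offDiag, Finset.univ_product_univ]
    rw [huniv', Finset.sum_union (Finset.disjoint_diag_offDiag _)]
    have hdiag : ∑ p ∈ (Finset.univ : Finset A).diag,
        ((Finset.univ.filter (fun h : H => eval h p.1 = eval h p.2)).card : ℝ)
        = N * M := by
      rw [Finset.sum_congr rfl (g := fun _ => (M : ℝ)) (fun p hp => ?_)]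
      · rw [Finset.sum_const, Finset.diag_card, nsmul_eq_mul, Finset.card_univ]
      · obtain ⟨-, h2⟩ := Finset.mem_diag.mp hp
        rw [h2]
        simp [hM, Finset.card_univ]
    have hoff : ∑ p ∈ (Finset.univ : Finset A).offDiag,
        ((Finset.univ.filter (fun h : H => eval h p.1 = eval h p.2)).card : ℝ)
        ≤ (N * N - N) * (M / (2 ^ k : ℝ)) := by
      have hbound : ∀ p ∈ (Finset.univ : Finset A).offDiag,
          ((Finset.univ.filter (fun h : H => eval h p.1 = eval h p.2)).card : ℝ)
          ≤ M / (2 ^ k : ℝ) := by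
        intro p hp
        obtain ⟨-, -, hne⟩ := Finset.mem_offDiag.mp hp
        have := huniv p.1 p.2 hne
        rw [div_le_div_iff₀ hMpos hSpos] at this
        rw [le_div_iff₀ hSpos]
        linarith
      calc ∑ p ∈ (Finset.univ : Finset A).offDiag,
            ((Finset.univ.filter (fun h : H => eval h p.1 = eval h p.2)).card : ℝ)
          ≤ ∑ _p ∈ (Finset.univ : Finset A).offDiag, ((M : ℝ) / (2 ^ k : ℝ)) :=
            Finset.sum_le_sum hbound
        _ = (N * N - N) * (M / (2 ^ k : ℝ)) := by
            rw [Finset.sum_const, nsmul_eq_mul, Finset.offDiag_card, Finset.card_univ]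
            have hN1 : 1 ≤ N := Fintype.card_pos
            rw [← hN]
            rw [Nat.cast_sub (show N ≤ N * N by nlinarith)]
            push_cast
            ring_nf
    linarith
  -- total sum of squares bound
  have hsq : (∑ q : H × Fin (2 ^ k), ((n q : ℝ)) ^ 2)
      ≤ N * M + (N * N - N) * (M / (2 ^ k : ℝ)) := by
    calc (∑ q : H × Fin (2 ^ k), ((n q : ℝ)) ^ 2)
        = ((∑ q : H × Fin (2 ^ k), (n q) ^ 2 : ℕ) : ℝ) := by push_cast; rfl
      _ = ((∑ h : H, ∑ w : Fin (2 ^ k), (n (h, w)) ^ 2 : ℕ) : ℝ) := by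
          rw [Fintype.sum_prod_type]
      _ = ((∑ p : A × A,
            (Finset.univ.filter (fun h : H => eval h p.1 = eval h p.2)).card : ℕ) : ℝ) := by
          rw [Finset.sum_congr rfl (fun h _ => hrow2 h), hswap]
      _ = ∑ p : A × A,
            ((Finset.univ.filter (fun h : H => eval h p.1 = eval h p.2)).card : ℝ) := by
          push_cast; rfl
      _ ≤ _ := hcoll
  -- sum over T equals total sum
  have hTsum : ∑ q ∈ T, (n q : ℝ) = (M : ℝ) * N := by
    have : ∑ q ∈ T, n q = ∑ q : H × Fin (2 ^ k), n q := by
      refine Finset.sum_subset (Finset.subset_univ _) (fun q _ hq => ?_)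
      rw [hT, Finset.mem_filter] at hq
      push_neg at hq
      have hempty : (Finset.univ.filter (fun a : A => eval q.1 a = q.2)) = ∅ := by
        refine Finset.filter_eq_empty_iff.mpr (fun a _ => ?_)
        exact fun hcontra => (hq (Finset.mem_univ q)) a hcontra
      simp [hn, hempty]
    rw [← Nat.cast_mul, ← hsum, ← this]
    push_cast; rfl
  have hTsq : ∑ q ∈ T, ((n q : ℝ)) ^ 2 ≤ ∑ q : H × Fin (2 ^ k), ((n q : ℝ)) ^ 2 :=
    Finset.sum_le_sum_of_subset_of_nonneg (Finset.subset_univ _)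
      (fun q _ _ => sq_nonneg _)
  -- Cauchy–Schwarz
  have hCS : ((M : ℝ) * N) ^ 2 ≤ (T.card : ℝ) * (N * M + (N * N - N) * (M / (2 ^ k : ℝ))) := by
    calc ((M : ℝ) * N) ^ 2 = (∑ q ∈ T, (n q : ℝ)) ^ 2 := by rw [hTsum]
      _ ≤ (T.card : ℝ) * ∑ q ∈ T, ((n q : ℝ)) ^ 2 := sq_sum_le_card_mul_sum_sq
      _ ≤ (T.card : ℝ) * (N * M + (N * N - N) * (M / (2 ^ k : ℝ))) := by
          have := hTsq.trans hsq
          have ht0 : (0 : ℝ) ≤ (T.card : ℝ) := Nat.cast_nonneg _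
          nlinarith
  -- final arithmetic
  have hNpos : (0 : ℝ) < (N : ℝ) := by exact_mod_cast Fintype.card_pos
  have hSleN : (2 ^ k : ℝ) ≤ (N : ℝ) := by exact_mod_cast hS1
  have ht0 : (0 : ℝ) ≤ (T.card : ℝ) := Nat.cast_nonneg _
  rw [le_div_iff₀ (by positivity : (0:ℝ) < (M : ℝ) * (2 ^ k : ℝ))]
  -- goal : 1/2 * (M * 2^k) ≤ T.card
  have hD : (N : ℝ) * M + ((N : ℝ) * N - N) * (M / (2 ^ k : ℝ))
      ≤ 2 * N * N * M / (2 ^ k : ℝ) := by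
    have h1 : (N : ℝ) * M ≤ N * N * M / (2 ^ k : ℝ) := by
      rw [le_div_iff₀ hSpos]
      nlinarith [mul_le_mul_of_nonneg_left hSleN (mul_nonneg hNpos.le hMpos.le)]
    have h2 : ((N : ℝ) * N - N) * (M / (2 ^ k : ℝ)) ≤ N * N * M / (2 ^ k : ℝ) := by
      rw [mul_div_assoc']
      gcongr
      nlinarith [mul_nonneg hNpos.le hMpos.le]
    have : (2 : ℝ) * N * N * M / (2 ^ k : ℝ)
        = N * N * M / (2 ^ k : ℝ) + N * N * M / (2 ^ k : ℝ) := by ring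
    linarith [this]
  have hCS' : ((M : ℝ) * N) ^ 2 ≤ (T.card : ℝ) * (2 * N * N * M / (2 ^ k : ℝ)) :=
    hCS.trans (mul_le_mul_of_nonneg_left hD ht0)
  have h3 : ((M : ℝ) * N) ^ 2 * (2 ^ k : ℝ) ≤ (T.card : ℝ) * (2 * N * N * M) := by
    have := mul_le_mul_of_nonneg_right hCS' hSpos.le
    rwa [mul_assoc, div_mul_cancel₀ _ (ne_of_gt hSpos)] at this
  nlinarith [h3, mul_pos hMpos (mul_pos hNpos hNpos), sq_nonneg ((N:ℝ))]
end
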